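/- Let A be a finite-dimensional Hopf algebra over a field k and let J be a normalized twist for A. Then the Killing form of A is invariant under twisting: (a, b)^J = (a, b) for all a, b ∈ A, where (a,b) = tr(ad(ab)) is the Killing form of A and (a,b)^J = tr(ad^J(ab)) is the Killing form of the twisted Hopf algebra A^J. In particular the Killing radicals coincide: A^⊥ = (A^J)^⊥. -/

import Mathlib

open TensorProduct

noncomputable section

variable (k : Type*) [Field k] (A : Type*) [Ring A] [HopfAlgebra k A]

/-- `PposGen D n a = a₍₁₎ ⋯ a₍ₙ₎` (with value `ε(a)1` for `n = 0`), built from a given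
comultiplication-like map `D`. -/
def PposGen (D : A →ₗ[k] A ⊗[k] A) : ℕ → (A →ₗ[k] A)
  | 0 => Algebra.linearMap k A ∘ₗ Coalgebra.counit
  | n+1 => LinearMap.mul' k A ∘ₗ TensorProduct.map LinearMap.id (PposGen D n) ∘ₗ D

/-- Reversed products of Sweedler components: `QposGen D n a = a₍ₙ₎ ⋯ a₍₁₎`. -/
def QposGen (D : A →ₗ[k] A ⊗[k] A) : ℕ → (A →ₗ[k] A)
  | 0 => Algebra.linearMap k A ∘ₗ Coalgebra.counit
  | n+1 => LinearMap.mul' k A ∘ₗ (TensorProduct.comm k A A).toLinearMap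
      ∘ₗ TensorProduct.map LinearMap.id (QposGen D n) ∘ₗ D

/-- The `n`-th Sweedler power map associated to a comultiplication-like map `D` and an
antipode-like map `S'`: for `n ≥ 0` it is `a ↦ a₍₁₎ ⋯ a₍ₙ₎`, and for `n ≤ -1` it is
`a ↦ S'(a₍₋ₙ₎ ⋯ a₍₁₎)`. -/
def PGen (D : A →ₗ[k] A ⊗[k] A) (S' : A →ₗ[k] A) (n : ℤ) : A →ₗ[k] A :=
  if 0 ≤ n then PposGen k A D n.toNat else S' ∘ₗ QposGen k A D (-n).toNat

/-- The `n`-th Sweedler power map `P_n` of the Hopf algebra `A`. -/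
def SweedlerP (n : ℤ) : A →ₗ[k] A :=
  PGen k A Coalgebra.comul (HopfAlgebra.antipode (R := k)) n

/-- `Λ` is a left integral in `A`: `a Λ = ε(a) Λ` for all `a`. -/
def IsLeftIntegral (Λ : A) : Prop := ∀ a : A, a * Λ = Coalgebra.counit (R := k) a • Λ

/-- `α ∈ A*` is the distinguished group-like element associated to the left integral `Λ`:
`Λ a = α(a) Λ` for all `a`. -/
def IsDistinguished (Λ : A) (α : A →ₗ[k] k) : Prop := ∀ a : A, Λ * a = α a • Λ

/-- `a† = a₍₁₎ α(S⁻¹(a₍₂₎))`, as a linear map in `a` (here `Sinv` is the inverse of the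
antipode and `α` is the distinguished group-like element). -/
def dagger (α : A →ₗ[k] k) (Sinv : A →ₗ[k] A) : A →ₗ[k] A :=
  (TensorProduct.rid k A).toLinearMap ∘ₗ
    TensorProduct.map LinearMap.id (α ∘ₗ Sinv) ∘ₗ Coalgebra.comul

/-- A normalized twist `J` for the Hopf algebra `A`: an invertible element of `A ⊗ A`
(with specified inverse) satisfying `(ε ⊗ id)(J) = (id ⊗ ε)(J) = 1` and the cocycle
condition `(Δ ⊗ id)(J)(J ⊗ 1) = (id ⊗ Δ)(J)(1 ⊗ J)`. -/
structure NormalizedTwist where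
  J : A ⊗[k] A
  Jinv : A ⊗[k] A
  mul_inv : J * Jinv = 1
  inv_mul : Jinv * J = 1
  counit_id : (TensorProduct.lid k A) ((TensorProduct.map Coalgebra.counit LinearMap.id) J) = 1
  id_counit : (TensorProduct.rid k A) ((TensorProduct.map LinearMap.id Coalgebra.counit) J) = 1
  cocycle : (Algebra.TensorProduct.assoc k k k A A A)
      ((TensorProduct.map Coalgebra.comul LinearMap.id) J * (J ⊗ₜ[k] (1 : A)))
    = (TensorProduct.map LinearMap.id Coalgebra.comul) J * ((1 : A) ⊗ₜ[k] J)

variable {k A} (t : NormalizedTwist k A)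

/-- `Q_J = S(J⁽¹⁾) J⁽²⁾`. -/
def NormalizedTwist.QJ : A :=
  LinearMap.mul' k A ((TensorProduct.map (HopfAlgebra.antipode (R := k)) LinearMap.id) t.J)

/-- `Q_J⁻¹ = J⁻⁽¹⁾ S(J⁻⁽²⁾)`. -/
def NormalizedTwist.QJinv : A :=
  LinearMap.mul' k A ((TensorProduct.map LinearMap.id (HopfAlgebra.antipode (R := k))) t.Jinv)

/-- The twisted comultiplication `Δᴶ(a) = J⁻¹ Δ(a) J`. -/
def NormalizedTwist.comulJ : A →ₗ[k] A ⊗[k] A :=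
  LinearMap.mulLeft k t.Jinv ∘ₗ LinearMap.mulRight k t.J ∘ₗ Coalgebra.comul

/-- The twisted antipode `Sᴶ(a) = Q_J⁻¹ S(a) Q_J`. -/
def NormalizedTwist.SJ : A →ₗ[k] A :=
  LinearMap.mulLeft k t.QJinv ∘ₗ LinearMap.mulRight k t.QJ ∘ₗ HopfAlgebra.antipode (R := k)

/-- The `n`-th Sweedler power map of the twisted Hopf algebra `A^J`. -/
def NormalizedTwist.PJ (n : ℤ) : A →ₗ[k] A := PGen k A t.comulJ t.SJ n

/-- `T = J⁻⁽¹⁾ α(J⁻⁽²⁾)`. -/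
def NormalizedTwist.Telt (α : A →ₗ[k] k) : A :=
  (TensorProduct.rid k A) ((TensorProduct.map LinearMap.id α) t.Jinv)

/-- `R = α(J⁻⁽¹⁾) J⁻⁽²⁾`. -/
def NormalizedTwist.Relt (α : A →ₗ[k] k) : A :=
  (TensorProduct.lid k A) ((TensorProduct.map α LinearMap.id) t.Jinv)

/-- `R⁻¹ = α(J⁽¹⁾) J⁽²⁾`. -/
def NormalizedTwist.Rinv (α : A →ₗ[k] k) : A :=
  (TensorProduct.lid k A) ((TensorProduct.map α LinearMap.id) t.J)

end

noncomputable section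

variable (k : Type*) [Field k] (A : Type*) [Ring A] [HopfAlgebra k A]

/-- The adjoint representation associated to a comultiplication-like map `D` and an
antipode-like map `S'`: `(ad a)(b) = a₍₁₎ b S'(a₍₂₎)` (Sweedler components taken with
respect to `D`). -/
def adGen (D : A →ₗ[k] A ⊗[k] A) (S' : A →ₗ[k] A) : A →ₗ[k] A →ₗ[k] A :=
  TensorProduct.lift (LinearMap.mk₂ k
    (fun x y => LinearMap.mulLeft k x ∘ₗ LinearMap.mulRight k (S' y))
    (fun x x' y => by ext b; simp [add_mul])
    (fun c x y => by ext b; simp [smul_mul_assoc])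
    (fun x y y' => by ext b; simp [mul_add])
    (fun c x y => by ext b; simp [mul_smul_comm])) ∘ₗ D

/-- The adjoint representation `(ad a)(b) = a₍₁₎ b S(a₍₂₎)` of the Hopf algebra `A`. -/
def adRep : A →ₗ[k] A →ₗ[k] A :=
  adGen k A (Coalgebra.comul (R := k)) (HopfAlgebra.antipode (R := k))

/-- The Killing form `(a, b) = tr(ad(ab))` associated to `D` and `S'`. -/
def killingForm' (D : A →ₗ[k] A ⊗[k] A) (S' : A →ₗ[k] A) (a b : A) : k :=
  LinearMap.trace k A (adGen k A D S' (a * b))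

/-- The Killing radical `A^⊥ = {a ∈ A ∣ (a, b) = 0 for all b ∈ A}`, as a `k`-submodule. -/
def killingRad (D : A →ₗ[k] A ⊗[k] A) (S' : A →ₗ[k] A) : Submodule k A where
  carrier := {a : A | ∀ b : A, killingForm' k A D S' a b = 0}
  add_mem' := by
    intro a a' ha ha' b
    simp only [killingForm', Set.mem_setOf_eq] at ha ha' ⊢
    rw [add_mul, map_add, map_add, ha b, ha' b, add_zero]
  zero_mem' := by
    intro b
    simp [killingForm']
  smul_mem' := by
    intro c a ha b
    have := ha b
    simp only [killingForm'] at *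
    rw [smul_mul_assoc, map_smul, map_smul, this, smul_zero]

end


/-! Let `ρ : A ⊗ A → End A` be `ρ(x ⊗ y) b = x b S(y)`, an algebra map because `S` is an
anti-homomorphism. Then `ad a = ρ(Δ a)` and `adᴶ a = R_{Q_J} ∘ ρ(J⁻¹ Δ(a) J) ∘ R_{Q_J⁻¹}`, where `R`
is right multiplication, and both conjugations disappear under the trace since `ρ(J) ρ(J⁻¹) = 1`
and `Q_J Q_J⁻¹ = 1`. The latter comes from applying `x ⊗ y ⊗ z ↦ S(x) y S(z)` to the cocycle
condition multiplied on the right by `1 ⊗ J⁻¹`. -/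

section Sandwich

variable {k A : Type*} [CommSemiring k] [Semiring A] [HopfAlgebra k A]

local notation "S" => HopfAlgebra.antipode k
local notation "μ" => LinearMap.mul' k A

noncomputable def sandwichAlgHom : A ⊗[k] A →ₐ[k] Module.End k A :=
  Algebra.TensorProduct.lift (Algebra.lmul k A)
    ((Algebra.lsmul k k A).comp (HopfAlgebra.antipodeAlgHomOp k A))
    fun x y => LinearMap.commute_mulLeft_right x (S y)

@[simp]
lemma sandwichAlgHom_tmul (x y : A) :
    sandwichAlgHom (x ⊗ₜ[k] y) = LinearMap.mulLeft k x ∘ₗ LinearMap.mulRight k (S y) := rfl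

/-- `x ⊗ y ⊗ z ↦ S x * y * S z`. -/
noncomputable def sandwichContraction : A ⊗[k] (A ⊗[k] A) →ₗ[k] A :=
  μ ∘ₗ map S (μ ∘ₗ map LinearMap.id S)

@[simp]
lemma sandwichContraction_tmul (x : A) (w : A ⊗[k] A) :
    sandwichContraction (x ⊗ₜ[k] w) = S x * μ (map LinearMap.id S w) := rfl

lemma mul'_map_id_antipode_tmul_mul (y z : A) (w : A ⊗[k] A) :
    μ (map LinearMap.id S ((y ⊗ₜ[k] z) * w)) = y * μ (map LinearMap.id S w) * S z := by
  induction w using TensorProduct.induction_on with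
  | zero => simp
  | tmul p q => simp [HopfAlgebra.antipode_mul_antidistrib, mul_assoc]
  | add u v hu hv => simp_all [mul_add, add_mul]

lemma sandwichContraction_map_id_comul (u : A ⊗[k] A) :
    sandwichContraction (map LinearMap.id Coalgebra.comul u)
      = S (TensorProduct.rid k A (map LinearMap.id Coalgebra.counit u)) := by
  induction u using TensorProduct.induction_on with
  | zero => simp
  | tmul x y =>
    simp only [← LinearMap.lTensor_def, LinearMap.lTensor_tmul, sandwichContraction_tmul,
      HopfAlgebra.mul_antipode_lTensor_comul_apply, rid_tmul, map_smul]
    rw [Algebra.smul_def, Algebra.commutes]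
  | add u v hu hv => simp_all

lemma sandwichContraction_assoc_tmul_mul (z : A ⊗[k] A) (y F : A) (w : A ⊗[k] A) :
    sandwichContraction (Algebra.TensorProduct.assoc k k k A A A (z ⊗ₜ[k] y) * (F ⊗ₜ[k] w))
      = S F * μ (map S LinearMap.id z) * μ (map LinearMap.id S w) * S y := by
  induction z using TensorProduct.induction_on with
  | zero => simp
  | tmul x₁ x₂ =>
    simp [mul'_map_id_antipode_tmul_mul, HopfAlgebra.antipode_mul_antidistrib, mul_assoc]
  | add u v hu hv => simp_all [add_tmul, add_mul, mul_add]

lemma sandwichContraction_assoc_map_comul_id_mul (u : A ⊗[k] A) (w : A ⊗[k] (A ⊗[k] A)) :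
    sandwichContraction
        (Algebra.TensorProduct.assoc k k k A A A (map Coalgebra.comul LinearMap.id u) * w)
      = sandwichContraction w * S (TensorProduct.lid k A (map Coalgebra.counit LinearMap.id u)) := by
  induction u using TensorProduct.induction_on with
  | zero => simp
  | add u v hu hv => simp_all [add_mul, mul_add]
  | tmul x y =>
    induction w using TensorProduct.induction_on with
    | zero => simp
    | add w w' hw hw' => simp_all [mul_add, add_mul]
    | tmul F w =>
      rw [map_tmul, sandwichContraction_assoc_tmul_mul, ← LinearMap.rTensor_def,
        HopfAlgebra.mul_antipode_rTensor_comul_apply]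
      simp [Algebra.algebraMap_eq_smul_one]

end Sandwich

lemma LinearMap.trace_mul_mul_of_mul_eq_one {R M : Type*} [CommRing R] [AddCommGroup M]
    [Module R M] {f g : Module.End R M} (X : Module.End R M) (h : g * f = 1) :
    trace R M (f * X * g) = trace R M X := by
  rw [trace_mul_comm, ← mul_assoc, h, one_mul]


section Twist

variable {k A : Type*} [Field k] [Ring A] [HopfAlgebra k A]

local notation "S" => HopfAlgebra.antipode k

lemma adGen_antipode (D : A →ₗ[k] A ⊗[k] A) :
    adGen k A D S = sandwichAlgHom.toLinearMap ∘ₗ D :=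
  congrArg (· ∘ₗ D) (TensorProduct.ext' fun _ _ => rfl)

lemma adGen_mulLeft_mulRight_comp (D : A →ₗ[k] A ⊗[k] A) (S' : A →ₗ[k] A) (p q c : A) :
    adGen k A D (LinearMap.mulLeft k p ∘ₗ LinearMap.mulRight k q ∘ₗ S') c
      = LinearMap.mulRight k q ∘ₗ adGen k A D S' c ∘ₗ LinearMap.mulRight k p := by
  simp only [adGen, LinearMap.comp_apply]
  generalize D c = w
  induction w using TensorProduct.induction_on with
  | zero => simp
  | tmul x y => ext b; simp [mul_assoc]
  | add u v hu hv => ext b; simp_all [add_mul]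

variable (t : NormalizedTwist k A)

lemma NormalizedTwist.QJ_mul_QJinv : t.QJ * t.QJinv = 1 := by
  have key := congrArg (fun X => sandwichContraction (X * ((1 : A) ⊗ₜ[k] t.Jinv))) t.cocycle
  simp only [map_mul, mul_assoc, Algebra.TensorProduct.tmul_mul_tmul, one_mul, t.mul_inv] at key
  rwa [sandwichContraction_assoc_map_comul_id_mul, sandwichContraction_assoc_tmul_mul,
    ← Algebra.TensorProduct.one_def, mul_one, sandwichContraction_map_id_comul, t.counit_id,
    t.id_counit, HopfAlgebra.antipode_one, one_mul, mul_one, mul_one] at key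

lemma NormalizedTwist.trace_adGen (c : A) :
    LinearMap.trace k A (adGen k A t.comulJ t.SJ c)
      = LinearMap.trace k A (adGen k A Coalgebra.comul S c) := by
  have hQ : LinearMap.mulRight k t.QJinv * LinearMap.mulRight k t.QJ = 1 := by
    ext b
    simp [mul_assoc, t.QJ_mul_QJinv]
  have hJ : sandwichAlgHom t.J * sandwichAlgHom t.Jinv = 1 := by
    rw [← map_mul, t.mul_inv, map_one]
  calc LinearMap.trace k A (adGen k A t.comulJ t.SJ c)
      = LinearMap.trace k A (LinearMap.mulRight k t.QJ * sandwichAlgHom (t.comulJ c)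
          * LinearMap.mulRight k t.QJinv) := by
        rw [NormalizedTwist.SJ, adGen_mulLeft_mulRight_comp, adGen_antipode]
        rfl
    _ = LinearMap.trace k A (sandwichAlgHom (t.comulJ c)) :=
        LinearMap.trace_mul_mul_of_mul_eq_one _ hQ
    _ = LinearMap.trace k A
          (sandwichAlgHom t.Jinv * sandwichAlgHom (Coalgebra.comul c) * sandwichAlgHom t.J) := by
        rw [← map_mul, ← map_mul, mul_assoc]
        rfl
    _ = LinearMap.trace k A (adGen k A Coalgebra.comul S c) := by
        rw [LinearMap.trace_mul_mul_of_mul_eq_one _ hJ, adGen_antipode]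
        rfl

end Twist

theorem killing_form_twist_invariant_general
    (k : Type*) [Field k] (A : Type*) [Ring A] [HopfAlgebra k A]
    (t : NormalizedTwist k A) :
    (∀ a b : A, killingForm' k A t.comulJ t.SJ a b
        = killingForm' k A (Coalgebra.comul (R := k)) (HopfAlgebra.antipode (R := k)) a b) ∧
    killingRad k A t.comulJ t.SJ
      = killingRad k A (Coalgebra.comul (R := k)) (HopfAlgebra.antipode (R := k)) := by
  have hform : ∀ a b : A, killingForm' k A t.comulJ t.SJ a b
      = killingForm' k A Coalgebra.comul (HopfAlgebra.antipode k) a b :=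
    fun a b => t.trace_adGen (a * b)
  exact ⟨hform, Submodule.ext fun a => forall_congr' fun b => by rw [hform]⟩

/-- Proposition 5.4. Let `A` be a finite-dimensional Hopf algebra and
`J` a normalized twist for `A`. Then the Killing form of `A` is invariant under twisting:
`(a, b)ᴶ = (a, b)` for all `a, b ∈ A`; in particular `A^⊥ = (A^J)^⊥`. -/
theorem killing_form_twist_invariant
    (k : Type*) [Field k] (A : Type*) [Ring A] [HopfAlgebra k A] [FiniteDimensional k A]
    (t : NormalizedTwist k A) :
    (∀ a b : A, killingForm' k A t.comulJ t.SJ a b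
        = killingForm' k A (Coalgebra.comul (R := k)) (HopfAlgebra.antipode (R := k)) a b) ∧
    killingRad k A t.comulJ t.SJ
      = killingRad k A (Coalgebra.comul (R := k)) (HopfAlgebra.antipode (R := k)) :=
  killing_form_twist_invariant_general k A t
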